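/- arXiv:1009.4126 — 4 statements merged into one kernel-verified Lean document; each statement's English description precedes it below -/
import Mathlib

section
/- Let p be a prime, O = ℤ[E,F]/(E^{p-1}F - p), with λ, μ the images of E, F, and P(X) = X^p + Σ_{i=1}^{p-1} (1/p)·C(p,i)·λ^{i-1}·μ·X^i. Then P(X + Y + λXY) = P(X) + P(Y) + λ^p·P(X)·P(Y) in O[X,Y]. -/
noncomputable section

/-- The ring `O = ℤ[E,F]/(E^(p-1) F - p)`. -/
abbrev TOring (p : ℕ) : Type :=
  MvPolynomial (Fin 2) ℤ ⧸
    Ideal.span {(MvPolynomial.X 0 : MvPolynomial (Fin 2) ℤ) ^ (p - 1) * MvPolynomial.X 1 -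
      (p : MvPolynomial (Fin 2) ℤ)}

/-- `λ`, the image of `E`. -/
def lam (p : ℕ) : TOring p := Ideal.Quotient.mk _ (MvPolynomial.X 0)

/-- `μ`, the image of `F`. -/
def mu (p : ℕ) : TOring p := Ideal.Quotient.mk _ (MvPolynomial.X 1)

/-- `P(X) = X^p + ∑_{i=1}^{p-1} (C(p,i)/p) λ^(i-1) μ X^i`. -/
def Ppoly (p : ℕ) : Polynomial (TOring p) :=
  Polynomial.X ^ p +
    ∑ i ∈ Finset.Ico 1 p,
      Polynomial.C (((p.choose i / p : ℕ) : TOring p) * lam p ^ (i - 1) * mu p) *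
        Polynomial.X ^ i

/-! `(1 + λX)^p = 1 + λ^p P(X)`: the binomial term `C(p,i) λ^i X^i` equals
`λ^p · (C(p,i)/p) λ^(i-1) μ X^i` once `p` is rewritten as `λ^(p-1) μ`. Since
`1 + λ(X + Y + λXY) = (1 + λX)(1 + λY)`, the identity therefore holds after multiplication by `λ^p`.
As `λ` is the image of the prime `E`, which does not divide `E^(p-1) F - p`, it is a
non-zerodivisor in `O`, so `λ^p` can be cancelled. -/

theorem Ideal.Quotient.isRegular_mk_of_prime_of_not_dvd {R : Type*} [CommRing R] [IsDomain R]
    {x f : R} (hx : Prime x) (hxf : ¬ x ∣ f) :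
    IsRegular (Ideal.Quotient.mk (Ideal.span {f}) x) := by
  rw [← isLeftRegular_iff_isRegular]
  intro a b hab
  obtain ⟨a, rfl⟩ := Ideal.Quotient.mk_surjective a
  obtain ⟨b, rfl⟩ := Ideal.Quotient.mk_surjective b
  simp only [← map_mul, Ideal.Quotient.eq, Ideal.mem_span_singleton] at hab ⊢
  obtain ⟨g, hg⟩ := hab
  obtain ⟨g', rfl⟩ : x ∣ g :=
    (hx.dvd_or_dvd ⟨a - b, by linear_combination -hg⟩).resolve_left hxf
  exact ⟨g', mul_left_cancel₀ hx.ne_zero (by linear_combination hg)⟩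

theorem isRegular_lam {p : ℕ} (hp : p.Prime) : IsRegular (lam p) := by
  refine Ideal.Quotient.isRegular_mk_of_prime_of_not_dvd MvPolynomial.X_prime ?_
  rintro ⟨g, hg⟩
  have h := congrArg MvPolynomial.constantCoeff hg
  simp [zero_pow (Nat.sub_ne_zero_of_lt hp.one_lt), hp.ne_zero] at h

theorem natCast_eq_lam_pow_mul_mu (p : ℕ) : (p : TOring p) = lam p ^ (p - 1) * mu p := by
  rw [lam, mu, ← map_pow, ← map_mul, ← map_natCast (Ideal.Quotient.mk _), eq_comm,
    Ideal.Quotient.eq, Ideal.mem_span_singleton]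

theorem choose_mul_lam_pow {p : ℕ} (hp : p.Prime) {i : ℕ} (hi : i ∈ Finset.Ico 1 p) :
    (p.choose i : TOring p) * lam p ^ i =
      lam p ^ p * ((p.choose i / p : ℕ) * lam p ^ (i - 1) * mu p) := by
  obtain ⟨hi₁, hip⟩ := Finset.mem_Ico.mp hi
  obtain ⟨c, hc⟩ := hp.dvd_choose_self (by omega) hip
  have hpow : lam p ^ (p - 1) * lam p ^ i = lam p ^ p * lam p ^ (i - 1) := by
    rw [← pow_add, ← pow_add]
    congr 1
    omega
  rw [hc, Nat.mul_div_cancel_left c hp.pos, Nat.cast_mul, natCast_eq_lam_pow_mul_mu]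
  linear_combination (c : TOring p) * mu p * hpow

open Polynomial in
theorem one_add_C_lam_mul_X_pow {p : ℕ} (hp : p.Prime) :
    (1 + C (lam p) * X) ^ p = 1 + C (lam p ^ p) * Ppoly p := by
  have hterm : ∀ k ∈ Finset.Ico 1 p, (C (lam p) * X) ^ k * (p.choose k : (TOring p)[X]) =
      C (lam p ^ p) * (C ((p.choose k / p : ℕ) * lam p ^ (k - 1) * mu p) * X ^ k) := by
    intro k hk
    rw [← mul_assoc, ← C_mul, ← choose_mul_lam_pow hp hk, C_mul, C_pow, ← map_natCast C]
    ring
  rw [add_comm, _root_.add_pow (R := (TOring p)[X]), Finset.sum_range_succ,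
    Finset.sum_range_eq_add_Ico _ hp.pos,
    Finset.sum_congr rfl fun k hk => by rw [one_pow, mul_one, hterm k hk], Ppoly]
  simp only [Nat.choose_zero_right, Nat.choose_self, Nat.cast_one, pow_zero, one_pow, mul_one,
    ← Finset.mul_sum, C_pow]
  ring

open MvPolynomial in
theorem P_is_additive_for_star (p : ℕ) (hp : p.Prime) :
    Polynomial.aeval
        ((X 0 : MvPolynomial (Fin 2) (TOring p)) + X 1 + MvPolynomial.C (lam p) * (X 0 * X 1))
        (Ppoly p) =
      Polynomial.aeval (X 0 : MvPolynomial (Fin 2) (TOring p)) (Ppoly p) +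
        Polynomial.aeval (X 1 : MvPolynomial (Fin 2) (TOring p)) (Ppoly p) +
        MvPolynomial.C (lam p ^ p) *
          (Polynomial.aeval (X 0 : MvPolynomial (Fin 2) (TOring p)) (Ppoly p) *
            Polynomial.aeval (X 1 : MvPolynomial (Fin 2) (TOring p)) (Ppoly p)) := by
  set x : MvPolynomial (Fin 2) (TOring p) := X 0
  set y : MvPolynomial (Fin 2) (TOring p) := X 1
  have one_add_lam_mul_pow (z : MvPolynomial (Fin 2) (TOring p)) :
      (1 + C (lam p) * z) ^ p = 1 + C (lam p ^ p) * Polynomial.aeval z (Ppoly p) := by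
    simpa using congrArg (Polynomial.aeval z) (one_add_C_lam_mul_X_pow hp)
  have hstar : 1 + C (lam p) * (x + y + C (lam p) * (x * y)) =
      (1 + C (lam p) * x) * (1 + C (lam p) * y) := by
    ring
  have hprod := one_add_lam_mul_pow (x + y + C (lam p) * (x * y))
  rw [hstar, mul_pow, one_add_lam_mul_pow x, one_add_lam_mul_pow y] at hprod
  have hreg : IsRegular (C (lam p ^ p) : MvPolynomial (Fin 2) (TOring p)) :=
    ((isRegular_lam hp).pow p).monomial
  refine hreg.left ?_
  linear_combination -hprod
end
end

section
/- In the ring O = ℤ[E,F]/(E^{p-1}F - p) with p prime, the image λ of E is not a zero divisor. -/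
noncomputable section

/-! `E` is a prime element of the domain `ℤ[E,F]` that does not divide the relation
`r = E^(p-1) F - p`. So if `E g = r h`, then `E ∣ h`, and cancelling `E` gives `r ∣ g`. -/

theorem Prime.dvd_of_dvd_mul_left_of_not_dvd {R : Type*} [CommRing R] [IsDomain R]
    {a f g : R} (ha : Prime a) (hf : ¬a ∣ f) (h : f ∣ a * g) : f ∣ g := by
  obtain ⟨k, hk⟩ := h
  obtain ⟨m, rfl⟩ := (ha.dvd_or_dvd ⟨g, hk.symm⟩).resolve_left hf
  refine ⟨m, mul_left_cancel₀ ha.ne_zero ?_⟩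
  rw [hk]
  ring

theorem Ideal.Quotient.eq_zero_of_mk_mul_eq_zero_of_prime {R : Type*} [CommRing R]
    [IsDomain R] {a f : R} (ha : Prime a) (hf : ¬a ∣ f) {x : R ⧸ Ideal.span {f}}
    (h : Ideal.Quotient.mk _ a * x = 0) : x = 0 := by
  obtain ⟨g, rfl⟩ := Ideal.Quotient.mk_surjective x
  rw [← map_mul, Ideal.Quotient.eq_zero_iff_mem, Ideal.mem_span_singleton] at h
  rw [Ideal.Quotient.eq_zero_iff_mem, Ideal.mem_span_singleton]
  exact ha.dvd_of_dvd_mul_left_of_not_dvd hf h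

open MvPolynomial in
theorem X_zero_not_dvd_X_zero_pow_mul_X_one_sub_natCast (p : ℕ) :
    ¬(X 0 : MvPolynomial (Fin 2) ℤ) ∣ X 0 ^ (p - 1) * X 1 - (p : MvPolynomial (Fin 2) ℤ) := by
  intro h
  -- `E = 0, F = 2` kills `E` but sends the relation to `2`, `1` or `-p`
  -- according as `p = 0`, `p = 1` or `p ≥ 2`.
  have h_eval : (0 ^ (p - 1) * 2 - p : ℤ) = 0 := by simpa using map_dvd (eval ![0, 2]) h
  rcases p with _ | _ | p <;> grind

theorem lam_not_zeroDivisor_general (p : ℕ) :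
    ∀ x : TOring p, lam p * x = 0 → x = 0 :=
  fun _ ↦ Ideal.Quotient.eq_zero_of_mk_mul_eq_zero_of_prime MvPolynomial.X_prime
    (X_zero_not_dvd_X_zero_pow_mul_X_one_sub_natCast p)

theorem lam_not_zeroDivisor (p : ℕ) (hp : p.Prime) :
    ∀ x : TOring p, lam p * x = 0 → x = 0 :=
  lam_not_zeroDivisor_general p
end
end

section
/- Let p be prime, R a commutative ring containing elements λ, μ with λ^{p-1}μ = p, and define φ(u) = u^p + Σ_{i=1}^{p-1} (1/p)·C(p,i)·λ^{i-1}·μ·u^i for u ∈ R. Then for all u ∈ R, 1 + λ^p·φ(u) = (1 + λu)^p. -/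
/-! Expand `(1 + λu)^p` binomially. For `0 < i < p` the coefficient `C(p,i)` is divisible by `p`,
and `p = λ^(p-1) μ` absorbs the missing powers of `λ`:
`λ^p · (C(p,i)/p) λ^(i-1) μ u^i = C(p,i) (λu)^i`. -/

theorem one_add_pow_eq_one_add_pow_add_sum_Ico {R : Type*} [CommSemiring R] {n : ℕ} (hn : 0 < n)
    (x : R) : (1 + x) ^ n = 1 + x ^ n + ∑ i ∈ Finset.Ico 1 n, (n.choose i : R) * x ^ i := by
  rw [add_comm, add_pow, Finset.sum_range_succ, Finset.range_eq_Ico,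
    Finset.sum_eq_sum_Ico_succ_bot hn]
  simp only [one_pow, mul_one, pow_zero, zero_add, Nat.choose_zero_right,
    Nat.choose_self, Nat.cast_one, mul_comm (x ^ _) (Nat.cast _)]
  abel

theorem pow_mul_choose_div_mul_eq_choose_mul_pow {R : Type*} [CommSemiring R] {n i : ℕ}
    (hn : 0 < n) (hi : 0 < i) (hdvd : n ∣ n.choose i) (lam mu u : R)
    (hlm : lam ^ (n - 1) * mu = n) :
    lam ^ n * (((n.choose i / n : ℕ) : R) * lam ^ (i - 1) * mu * u ^ i) =
      n.choose i * (lam * u) ^ i := by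
  have hpow : lam ^ n * lam ^ (i - 1) = lam ^ (n - 1) * lam ^ i := by
    rw [← pow_add, ← pow_add]; congr 1; omega
  have hchoose : ((n.choose i / n : ℕ) : R) * n = n.choose i := by
    rw [← Nat.cast_mul, Nat.div_mul_cancel hdvd]
  calc lam ^ n * (((n.choose i / n : ℕ) : R) * lam ^ (i - 1) * mu * u ^ i)
      = ((n.choose i / n : ℕ) : R) * (lam ^ n * lam ^ (i - 1)) * mu * u ^ i := by ring
    _ = ((n.choose i / n : ℕ) : R) * (lam ^ (n - 1) * mu) * (lam * u) ^ i := by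
        rw [hpow, mul_pow]; ring
    _ = n.choose i * (lam * u) ^ i := by rw [hlm, hchoose]

/-- If `λ^(p-1) μ = p` then `1 + λ^p φ(u) = (1 + λu)^p`, where
`φ(u) = u^p + ∑_{i=1}^{p-1} (C(p,i)/p) λ^(i-1) μ u^i`. -/
theorem one_add_lam_pow_mul_phi (p : ℕ) (hp : p.Prime) (R : Type*) [CommRing R]
    (lam mu : R) (hlm : lam ^ (p - 1) * mu = (p : R)) (u : R) :
    1 + lam ^ p *
        (u ^ p + ∑ i ∈ Finset.Ico 1 p, ((p.choose i / p : ℕ) : R) * lam ^ (i - 1) * mu * u ^ i) =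
      (1 + lam * u) ^ p := by
  have hterm : ∀ i ∈ Finset.Ico 1 p,
      lam ^ p * (((p.choose i / p : ℕ) : R) * lam ^ (i - 1) * mu * u ^ i) =
        p.choose i * (lam * u) ^ i := fun i hi => by
    rw [Finset.mem_Ico] at hi
    exact pow_mul_choose_div_mul_eq_choose_mul_pow hp.pos hi.1
      (hp.dvd_choose_self (by omega) hi.2) lam mu u hlm
  rw [one_add_pow_eq_one_add_pow_add_sum_Ico hp.pos, mul_add, Finset.mul_sum,
    Finset.sum_congr rfl hterm, mul_pow, add_assoc]
end

section
/- Let p be prime, R a commutative ring with λ,μ ∈ R satisfying λ^{p-1}μ = p, and φ(u) = u^p + Σ_{i=1}^{p-1}(1/p)C(p,i)λ^{i-1}μu^i. Then φ is a homomorphism for the group laws u₁⋆u₂ = u₁+u₂+λu₁u₂ (source) and v₁⋆'v₂ = v₁+v₂+λ^p v₁v₂ (target): φ(u₁ + u₂ + λu₁u₂) = φ(u₁) + φ(u₂) + λ^p φ(u₁)φ(u₂) for all u₁,u₂ ∈ R. -/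
/-!
Multiplying by `λ^p` linearizes `φ`: since `λ^(p-1) μ = p`, the relation `p · C(p,i)/p = C(p,i)`
turns `λ^p φ(u)` into `(1 + λu)^p - 1`. As `u ↦ 1 + λu` carries `⋆` to multiplication, and
`v ↦ 1 + λ^p v` carries `⋆'` to multiplication, `λ^p` kills the defect
`φ(u₁ ⋆ u₂) - φ(u₁) ⋆' φ(u₂)`. So the identity holds whenever `λ` is a non-zero-divisor, in
particular in the universal ring `ℤ[μ, u₁, u₂][λ] / (λ^(p-1) μ - p)`, where `λ` is regular because
the constant term `-p` of the relation is. Specializing the universal ring gives the general case.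
-/

open Polynomial

section PhiMap

variable {R : Type*} [CommRing R]

def phiMap (p : ℕ) (lam mu u : R) : R :=
  u ^ p + ∑ i ∈ Finset.Ico 1 p, ((p.choose i / p : ℕ) : R) * lam ^ (i - 1) * mu * u ^ i

theorem map_phiMap {S : Type*} [CommRing S] (f : R →+* S) (p : ℕ) (lam mu u : R) :
    f (phiMap p lam mu u) = phiMap p (f lam) (f mu) (f u) := by
  simp [phiMap]

variable {p : ℕ} (hp : p.Prime) {lam mu : R} (hlm : lam ^ (p - 1) * mu = (p : R))
include hp hlm

theorem pow_mul_phiMap (u : R) : lam ^ p * phiMap p lam mu u = (1 + lam * u) ^ p - 1 := by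
  have hterm : ∀ i ∈ Finset.Ico 1 p,
      lam ^ p * (((p.choose i / p : ℕ) : R) * lam ^ (i - 1) * mu * u ^ i)
        = (lam * u) ^ i * (p.choose i : R) := by
    intro i hi
    obtain ⟨hi1, hip⟩ := Finset.mem_Ico.mp hi
    have hcast : ((p.choose i / p : ℕ) : R) * (p : R) = (p.choose i : R) := by
      rw [← Nat.cast_mul, Nat.div_mul_cancel (hp.dvd_choose_self (by omega) hip)]
    have hpow : lam ^ p * lam ^ (i - 1) = lam ^ i * lam ^ (p - 1) := by
      rw [← pow_add, ← pow_add]; congr 1; omega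
    calc lam ^ p * (((p.choose i / p : ℕ) : R) * lam ^ (i - 1) * mu * u ^ i)
        = ((p.choose i / p : ℕ) : R) * (lam ^ p * lam ^ (i - 1)) * mu * u ^ i := by ring
      _ = ((p.choose i / p : ℕ) : R) * (lam ^ (p - 1) * mu) * (lam * u) ^ i := by
        rw [hpow]; ring
      _ = (lam * u) ^ i * (p.choose i : R) := by rw [hlm, hcast]; ring
  have hbinom : (1 + lam * u) ^ p
      = 1 + ∑ i ∈ Finset.Ico 1 p, (lam * u) ^ i * (p.choose i : R) + (lam * u) ^ p := by
    rw [add_comm, add_pow, Finset.sum_range_succ, Finset.range_eq_Ico,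
      Finset.sum_eq_sum_Ico_succ_bot hp.pos]
    simp only [one_pow, mul_one, pow_zero, Nat.choose_zero_right, Nat.cast_one,
      Nat.choose_self, zero_add]
  rw [phiMap, mul_add, Finset.mul_sum, Finset.sum_congr rfl hterm, hbinom, mul_pow]
  ring

theorem pow_mul_phiMap_add_add_mul (u₁ u₂ : R) :
    lam ^ p * phiMap p lam mu (u₁ + u₂ + lam * u₁ * u₂)
      = lam ^ p * (phiMap p lam mu u₁ + phiMap p lam mu u₂
          + lam ^ p * phiMap p lam mu u₁ * phiMap p lam mu u₂) := by
  have h₁ := pow_mul_phiMap hp hlm u₁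
  have h₂ := pow_mul_phiMap hp hlm u₂
  calc lam ^ p * phiMap p lam mu (u₁ + u₂ + lam * u₁ * u₂)
      = ((1 + lam * u₁) * (1 + lam * u₂)) ^ p - 1 := by
        rw [pow_mul_phiMap hp hlm]; ring_nf
    _ = (lam ^ p * phiMap p lam mu u₁ + 1) * (lam ^ p * phiMap p lam mu u₂ + 1) - 1 := by
        rw [h₁, h₂, mul_pow]; ring
    _ = _ := by ring

theorem phiMap_add_add_mul_of_isLeftRegular (hlam : IsLeftRegular lam) (u₁ u₂ : R) :
    phiMap p lam mu (u₁ + u₂ + lam * u₁ * u₂)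
      = phiMap p lam mu u₁ + phiMap p lam mu u₂
          + lam ^ p * phiMap p lam mu u₁ * phiMap p lam mu u₂ :=
  hlam.pow p (pow_mul_phiMap_add_add_mul hp hlm u₁ u₂)

end PhiMap

theorem AdjoinRoot.isLeftRegular_root {S : Type*} [CommRing S] {q : S[X]}
    (hq : IsLeftRegular (q.coeff 0)) : IsLeftRegular (AdjoinRoot.root q) := by
  refine isLeftRegular_iff_right_eq_zero_of_mul.mpr fun x hx => ?_
  induction x using AdjoinRoot.induction_on with
  | ih f =>
    rw [← AdjoinRoot.mk_X, ← map_mul, AdjoinRoot.mk_eq_zero] at hx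
    obtain ⟨g, hg⟩ := hx
    have hg0 : g.coeff 0 = 0 := hq <| by
      simpa [mul_coeff_zero] using congrArg (coeff · 0) hg.symm
    obtain ⟨g', rfl⟩ := X_dvd_iff.mpr hg0
    refine AdjoinRoot.mk_eq_zero.mpr ⟨g', isRegular_X.left ?_⟩
    simp only [hg]
    ring

theorem phiMap_add_add_mul {R : Type*} [CommRing R] {p : ℕ} (hp : p.Prime) {lam mu : R}
    (hlm : lam ^ (p - 1) * mu = (p : R)) (u₁ u₂ : R) :
    phiMap p lam mu (u₁ + u₂ + lam * u₁ * u₂)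
      = phiMap p lam mu u₁ + phiMap p lam mu u₂
          + lam ^ p * phiMap p lam mu u₁ * phiMap p lam mu u₂ := by
  let q : (MvPolynomial (Fin 3) ℤ)[X] :=
    X ^ (p - 1) * C (MvPolynomial.X 0) - (p : (MvPolynomial (Fin 3) ℤ)[X])
  have hq0 : q.coeff 0 = -(p : MvPolynomial (Fin 3) ℤ) := by
    have : p - 1 ≠ 0 := by have := hp.two_le; omega
    simp [q, coeff_X_pow, this.symm]
  have hlam : IsLeftRegular (AdjoinRoot.root q) :=
    AdjoinRoot.isLeftRegular_root <| hq0 ▸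
      (IsRegular.of_ne_zero (neg_ne_zero.mpr (Nat.cast_ne_zero.mpr hp.ne_zero))).left
  have hlmU : AdjoinRoot.root q ^ (p - 1) * AdjoinRoot.of q (MvPolynomial.X 0) = (p : _) := by
    have h := AdjoinRoot.eval₂_root q
    simp only [q, eval₂_sub, eval₂_mul, eval₂_X_pow, eval₂_C, eval₂_natCast] at h
    exact sub_eq_zero.mp h
  have hspec : eval₂ (MvPolynomial.aeval ![mu, u₁, u₂]).toRingHom lam q = 0 := by
    simp [q, mul_comm mu, hlm]
  have hU := phiMap_add_add_mul_of_isLeftRegular hp hlmU hlam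
    (AdjoinRoot.of q (MvPolynomial.X 1)) (AdjoinRoot.of q (MvPolynomial.X 2))
  simpa [map_phiMap] using congrArg (AdjoinRoot.lift _ _ hspec) hU

/-- If `λ^(p-1) μ = p` then `φ(u) = u^p + ∑_{i=1}^{p-1} (C(p,i)/p) λ^(i-1) μ u^i` is a
homomorphism from the group law `u₁ ⋆ u₂ = u₁ + u₂ + λ u₁ u₂` to the group law
`v₁ ⋆' v₂ = v₁ + v₂ + λ^p v₁ v₂`. -/
theorem phi_hom (p : ℕ) (hp : p.Prime) (R : Type*) [CommRing R]
    (lam mu : R) (hlm : lam ^ (p - 1) * mu = (p : R)) :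
    letI phi : R → R := fun u =>
      u ^ p + ∑ i ∈ Finset.Ico 1 p, ((p.choose i / p : ℕ) : R) * lam ^ (i - 1) * mu * u ^ i
    ∀ u₁ u₂ : R,
      phi (u₁ + u₂ + lam * u₁ * u₂) = phi u₁ + phi u₂ + lam ^ p * phi u₁ * phi u₂ :=
  phiMap_add_add_mul hp hlm
end
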